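/- (Lemma 3, stability of an isolated region.) Assume the abstract FDTD-Q region setup, that the block matrix 𝒫 := Matrix.fromBlocks V (-(Δt/(2*ℏ)) • H) (-(Δt/(2*ℏ)) • H) V is positive definite, and that IP n = 0 for all n : ℕ. Let λmin and λmax be the smallest and largest eigenvalues of the real symmetric matrix 𝒫 and let Ψ n := Sum.elim (ψR n) (ψI n) : Fin N ⊕ Fin N → ℝ. Then for all n : ℕ, ‖Ψ n‖ ≤ Real.sqrt (λmax/λmin) * ‖Ψ 0‖, where ‖·‖ is the Euclidean norm. -/

import Mathlib

/-!
The block matrix `𝒫` is the discrete energy of the leap-frog scheme: pairing the two update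
equations with `ψR (n+1) + ψR n` and `ψI (n+1) + ψI n` and using the symmetry of `V` and `H`
shows that `Ψ (n+1)ᵀ 𝒫 Ψ (n+1) - Ψ nᵀ 𝒫 Ψ n = -Δt · IP n`. With no outward current the energy
is conserved, and the Rayleigh bounds `λmin ‖Ψ‖² ≤ Ψᵀ 𝒫 Ψ ≤ λmax ‖Ψ‖²` turn this into
`λmin ‖Ψ n‖² ≤ λmax ‖Ψ 0‖²`.
-/

open Matrix

namespace Matrix

variable {n m : Type*} [Fintype n] [Fintype m]

lemma IsSymm.dotProduct_mulVec_comm {α : Type*} [CommSemiring α] {S : Matrix n n α}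
    (hS : S.IsSymm) (x y : n → α) : x ⬝ᵥ S *ᵥ y = y ⬝ᵥ S *ᵥ x := by
  conv_lhs => rw [dotProduct_mulVec, ← hS.eq, vecMul_transpose, dotProduct_comm]

lemma sumElim_dotProduct_fromBlocks_mulVec_sumElim {α : Type*} [CommSemiring α]
    (A : Matrix n n α) (B : Matrix n m α) (D : Matrix m m α) (x : n → α) (y : m → α) :
    Sum.elim x y ⬝ᵥ fromBlocks A B Bᵀ D *ᵥ Sum.elim x y
      = x ⬝ᵥ A *ᵥ x + 2 * (x ⬝ᵥ B *ᵥ y) + y ⬝ᵥ D *ᵥ y := by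
  rw [fromBlocks_mulVec, sumElim_dotProduct_sumElim, Sum.elim_comp_inl, Sum.elim_comp_inr,
    dotProduct_add, dotProduct_add, dotProduct_mulVec y Bᵀ, vecMul_transpose,
    dotProduct_comm (B *ᵥ y)]
  ring

lemma div_two_dotProduct {K : Type*} [Field K] (u v : n → K) :
    (u / 2) ⬝ᵥ v = (u ⬝ᵥ v) / 2 := by
  simp [dotProduct, Finset.sum_div, div_mul_eq_mul_div]

lemma norm_euclideanSpace_equiv_symm_sq (x : n → ℝ) :
    ‖(EuclideanSpace.equiv n ℝ).symm x‖ ^ 2 = x ⬝ᵥ x := by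
  rw [EuclideanSpace.real_norm_sq_eq]
  simp [dotProduct, sq]

section Spectrum

open scoped MatrixOrder

variable [DecidableEq n] {A : Matrix n n ℝ}

lemma IsHermitian.sInf_spectrum_mul_dotProduct_self_le (hA : A.IsHermitian) (x : n → ℝ) :
    sInf (spectrum ℝ A) * (x ⬝ᵥ x) ≤ x ⬝ᵥ A *ᵥ x := by
  have hle : algebraMap ℝ _ (sInf (spectrum ℝ A)) ≤ A :=
    (algebraMap_le_iff_le_spectrum hA).2 fun _ h => csInf_le finite_real_spectrum.bddBelow h
  have := (le_iff.mp hle).dotProduct_mulVec_nonneg x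
  rw [Algebra.algebraMap_eq_smul_one, sub_mulVec, dotProduct_sub, smul_mulVec, one_mulVec,
    dotProduct_smul, star_trivial, smul_eq_mul] at this
  linarith

lemma IsHermitian.dotProduct_mulVec_le_sSup_spectrum_mul (hA : A.IsHermitian) (x : n → ℝ) :
    x ⬝ᵥ A *ᵥ x ≤ sSup (spectrum ℝ A) * (x ⬝ᵥ x) := by
  have hle : A ≤ algebraMap ℝ _ (sSup (spectrum ℝ A)) :=
    (le_algebraMap_iff_spectrum_le hA).2 fun _ h => le_csSup finite_real_spectrum.bddAbove h
  have := (le_iff.mp hle).dotProduct_mulVec_nonneg x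
  rw [Algebra.algebraMap_eq_smul_one, sub_mulVec, dotProduct_sub, smul_mulVec, one_mulVec,
    dotProduct_smul, star_trivial, smul_eq_mul] at this
  linarith

lemma PosDef.sInf_spectrum_pos [Nonempty n] (hA : A.PosDef) : 0 < sInf (spectrum ℝ A) := by
  rw [hA.isHermitian.spectrum_real_eq_range_eigenvalues]
  obtain ⟨i, hi⟩ :=
    (Set.range_nonempty _).csInf_mem (Set.finite_range hA.isHermitian.eigenvalues)
  exact hi ▸ hA.eigenvalues_pos i

lemma PosDef.norm_le_sqrt_mul_norm_of_dotProduct_mulVec_eq (hA : A.PosDef) {x y : n → ℝ}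
    (hxy : x ⬝ᵥ A *ᵥ x = y ⬝ᵥ A *ᵥ y) :
    ‖(EuclideanSpace.equiv n ℝ).symm x‖
      ≤ √(sSup (spectrum ℝ A) / sInf (spectrum ℝ A)) * ‖(EuclideanSpace.equiv n ℝ).symm y‖ := by
  cases isEmpty_or_nonempty n
  · simp [Subsingleton.elim ((EuclideanSpace.equiv n ℝ).symm x) 0]
  have hsq : ‖(EuclideanSpace.equiv n ℝ).symm x‖ ^ 2
      ≤ sSup (spectrum ℝ A) / sInf (spectrum ℝ A) * ‖(EuclideanSpace.equiv n ℝ).symm y‖ ^ 2 := by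
    rw [norm_euclideanSpace_equiv_symm_sq, norm_euclideanSpace_equiv_symm_sq, div_mul_eq_mul_div,
      le_div_iff₀ hA.sInf_spectrum_pos, mul_comm]
    calc sInf (spectrum ℝ A) * (x ⬝ᵥ x)
        ≤ x ⬝ᵥ A *ᵥ x := hA.isHermitian.sInf_spectrum_mul_dotProduct_self_le x
      _ = y ⬝ᵥ A *ᵥ y := hxy
      _ ≤ sSup (spectrum ℝ A) * (y ⬝ᵥ y) :=
        hA.isHermitian.dotProduct_mulVec_le_sSup_spectrum_mul y
  calc ‖(EuclideanSpace.equiv n ℝ).symm x‖ = √(‖(EuclideanSpace.equiv n ℝ).symm x‖ ^ 2) :=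
        (Real.sqrt_sq (norm_nonneg _)).symm
    _ ≤ √(sSup (spectrum ℝ A) / sInf (spectrum ℝ A) * ‖(EuclideanSpace.equiv n ℝ).symm y‖ ^ 2) :=
        Real.sqrt_le_sqrt hsq
    _ = √(sSup (spectrum ℝ A) / sInf (spectrum ℝ A)) * ‖(EuclideanSpace.equiv n ℝ).symm y‖ := by
        rw [Real.sqrt_mul' _ (sq_nonneg _), Real.sqrt_sq (norm_nonneg _)]

end Spectrum

end Matrix

theorem leapfrog_energy_succ_sub {n : Type*} [Fintype n] {V H : Matrix n n ℝ} (hV : V.IsSymm)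
    (hH : H.IsSymm) {ℏ Δt : ℝ} (hℏ : ℏ ≠ 0) {x y x' y' bR bI : n → ℝ}
    (hA : ℏ • V *ᵥ (x' - x) = Δt • (H *ᵥ y' - bI))
    (hB : ℏ • V *ᵥ (y' - y) = Δt • (-(H *ᵥ x) + bR)) :
    let P := fromBlocks V (-(Δt / (2 * ℏ)) • H) (-(Δt / (2 * ℏ)) • H) V
    Sum.elim x' y' ⬝ᵥ P *ᵥ Sum.elim x' y' - Sum.elim x y ⬝ᵥ P *ᵥ Sum.elim x y
      = -Δt * ((2 / ℏ) * (((x' + x) / 2) ⬝ᵥ bI - ((y' + y) / 2) ⬝ᵥ bR)) := by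
  intro P
  have hP : P = fromBlocks V (-(Δt / (2 * ℏ)) • H) (-(Δt / (2 * ℏ)) • H)ᵀ V := by
    rw [transpose_smul, hH.eq]
  have hA' := congrArg ((x' + x) ⬝ᵥ ·) hA
  have hB' := congrArg ((y' + y) ⬝ᵥ ·) hB
  simp only [dotProduct_smul, smul_eq_mul, mulVec_sub, dotProduct_sub, add_dotProduct,
    dotProduct_add, dotProduct_neg] at hA' hB'
  rw [hV.dotProduct_mulVec_comm x x'] at hA'
  rw [hV.dotProduct_mulVec_comm y y', hH.dotProduct_mulVec_comm y' x,
    hH.dotProduct_mulVec_comm y x] at hB'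
  rw [hP, sumElim_dotProduct_fromBlocks_mulVec_sumElim,
    sumElim_dotProduct_fromBlocks_mulVec_sumElim, div_two_dotProduct, div_two_dotProduct]
  simp only [smul_mulVec, dotProduct_smul, smul_eq_mul, add_dotProduct]
  field_simp
  linear_combination hA' + hB'

theorem fdtdq_isolated_region_stability
    (N M : ℕ) (ℏ Δt : ℝ) (hℏ : 0 < ℏ)
    (H : Matrix (Fin N) (Fin N) ℝ) (hH : Hᵀ = H)
    (Hb : Matrix (Fin N) (Fin M) ℝ)
    (d : Fin N → ℝ)
    (ψR ψI : ℕ → (Fin N → ℝ)) (gR gI : ℕ → (Fin M → ℝ))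
    (hUpdA : ∀ n : ℕ, ℏ • (Matrix.diagonal d).mulVec (ψR (n+1) - ψR n)
        = Δt • (H.mulVec (ψI (n+1)) - Hb.mulVec (gI n)))
    (hUpdB : ∀ n : ℕ, ℏ • (Matrix.diagonal d).mulVec (ψI (n+1) - ψI n)
        = Δt • (-(H.mulVec (ψR n)) + Hb.mulVec (gR n)))
    (Pmat : Matrix (Fin N ⊕ Fin N) (Fin N ⊕ Fin N) ℝ)
    (hPmat : Pmat = Matrix.fromBlocks (Matrix.diagonal d) (-(Δt/(2*ℏ)) • H)
        (-(Δt/(2*ℏ)) • H) (Matrix.diagonal d))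
    (hPD : Pmat.PosDef)
    (hIP : ∀ n : ℕ, (2/ℏ) * (((ψR (n+1) + ψR n)/2) ⬝ᵥ Hb.mulVec (gI n)
        - ((ψI (n+1) + ψI n)/2) ⬝ᵥ Hb.mulVec (gR n)) = 0) :
    ∀ n : ℕ,
      ‖(EuclideanSpace.equiv (Fin N ⊕ Fin N) ℝ).symm (Sum.elim (ψR n) (ψI n))‖
        ≤ Real.sqrt (sSup (spectrum ℝ Pmat) / sInf (spectrum ℝ Pmat))
          * ‖(EuclideanSpace.equiv (Fin N ⊕ Fin N) ℝ).symm (Sum.elim (ψR 0) (ψI 0))‖ := by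
  subst hPmat
  set energy := fun m => Sum.elim (ψR m) (ψI m) ⬝ᵥ
    fromBlocks (diagonal d) (-(Δt / (2 * ℏ)) • H) (-(Δt / (2 * ℏ)) • H) (diagonal d) *ᵥ
      Sum.elim (ψR m) (ψI m)
  have henergy_succ (m : ℕ) : energy (m + 1) = energy m := by
    have hstep := leapfrog_energy_succ_sub (isSymm_diagonal d) hH hℏ.ne' (hUpdA m) (hUpdB m)
    rwa [hIP m, mul_zero, sub_eq_zero] at hstep
  have henergy (m : ℕ) : energy m = energy 0 := by
    induction m with
    | zero => rfl
    | succ k ih => rw [henergy_succ k, ih]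
  exact fun n => hPD.norm_le_sqrt_mul_norm_of_dotProduct_mulVec_eq (henergy n)
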